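/- Let (F, Ψ₊, Ψ₋) be a family of SU(3)-structures on M⁶ depending on q, and let φ(q) = F(q)∧dq - Ψ₋(q) with *φ(q) = ½F(q)∧F(q) + Ψ₊(q)∧dq on M⁶ × ℝ. Then dφ = 4*φ holds if and only if dΨ₋(q) = -2F(q)∧F(q), ∂_qΨ₋ = 4Ψ₊ - dF, and dΨ₊ = -½∂_q(F∧F). Moreover, the last two (evolution) equations imply that ∂_q(dΨ₋ + 2F∧F) = 0, so the nearly half flat condition is preserved in q. -/

import Mathlib

/-! Writing `φ = -Ψ₋ + F ∧ dq`, the `dq`-free part of `dφ = 4*φ` is the nearly half flat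
condition and the `dq`-part is the evolution of `Ψ₋`.  Since `d² = 0`, the evolution of `Ψ₋`
gives `∂_q(dΨ₋ + 2F∧F) = 4 dΨ₊ + 2 ∂_q(F∧F)`.  Hence the evolution of `Ψ₊` says exactly that
`dΨ₋ + 2F∧F` is constant in `q`, which it is when it vanishes for every `q`. -/

variable {A : Type*}

/-- A form on `M⁶ × ℝ` is a pair `(α, β)` of `q`-dependent forms on `M⁶`, standing for
`α(q) + β(q) ∧ dq`.  `dProd d k` is the exterior derivative on the product
(`k` = degree of the `dq`-free part): `d(α + β∧dq) = dα + ((-1)^k ∂_qα + dβ) ∧ dq`. -/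
noncomputable def dProd [NormedRing A] [NormedAlgebra ℝ A] (d : A →L[ℝ] A) (k : ℕ)
    (ω : (ℝ → A) × (ℝ → A)) : (ℝ → A) × (ℝ → A) :=
  (fun q => d (ω.1 q), fun q => ((-1 : ℝ)) ^ k • deriv ω.1 q + d (ω.2 q))

section

variable [NormedRing A] [NormedAlgebra ℝ A] (d : A →L[ℝ] A) (F Ψp Ψm : ℝ → A) (q : ℝ)

theorem dProd_fst_neg_eq_iff :
    (dProd d 3 (fun s => -(Ψm s), F)).1 q = (4 : ℝ) • (((1 : ℝ) / 2) • (F q * F q)) ↔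
      d (Ψm q) = (-2 : ℝ) • (F q * F q) := by
  simp only [dProd, map_neg, neg_eq_iff_eq_neg]
  constructor <;> intro h <;> rw [h] <;> module

theorem dProd_snd_neg_eq_iff :
    (dProd d 3 (fun s => -(Ψm s), F)).2 q = (4 : ℝ) • Ψp q ↔
      deriv Ψm q = (4 : ℝ) • Ψp q - d (F q) := by
  simp only [dProd, deriv.fun_neg]
  constructor <;> intro h
  · linear_combination (norm := module) h
  · rw [h]; module

variable {d F Ψp Ψm q}

theorem deriv_d_add_two_smul_mul_self (hdd : ∀ x : A, d (d x) = 0)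
    (hF : DifferentiableAt ℝ F q) (hΨm : DifferentiableAt ℝ Ψm q)
    (hevol : deriv Ψm q = (4 : ℝ) • Ψp q - d (F q)) :
    deriv (fun s => d (Ψm s) + (2 : ℝ) • (F s * F s)) q
      = (4 : ℝ) • d (Ψp q) + (2 : ℝ) • deriv (fun s => F s * F s) q := by
  have hdΨm : HasDerivAt (fun s => d (Ψm s)) (d (deriv Ψm q)) q :=
    d.hasFDerivAt.comp_hasDerivAt q hΨm.hasDerivAt
  rw [deriv_fun_add hdΨm.differentiableAt ((hF.fun_mul hF).fun_const_smul (2 : ℝ)),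
    hdΨm.deriv, deriv_fun_const_smul_field, hevol, map_sub, map_smul, hdd, sub_zero]

end

theorem eq_neg_half_smul_iff {M : Type*} [AddCommGroup M] [Module ℝ M] (x y : M) :
    x = (-(1 : ℝ) / 2) • y ↔ (4 : ℝ) • x + (2 : ℝ) • y = 0 := by
  constructor <;> intro h
  · rw [h]; module
  · linear_combination (norm := module) ((1 : ℝ) / 4) • h

theorem nearlyParallelG2_iff_nearlyHalfFlat_evolution_general [NormedRing A] [NormedAlgebra ℝ A]
    (d : A →L[ℝ] A) (F Ψp Ψm : ℝ → A)
    (hF : Differentiable ℝ F) (hΨm : Differentiable ℝ Ψm)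
    (hdd : ∀ x : A, d (d x) = 0) :
    ((∀ q : ℝ,
        (dProd d 3 (fun s => -(Ψm s), fun s => F s)).1 q
          = (4 : ℝ) • (((1 : ℝ) / 2) • (F q * F q)) ∧
        (dProd d 3 (fun s => -(Ψm s), fun s => F s)).2 q
          = (4 : ℝ) • Ψp q) ↔
      (∀ q : ℝ,
        d (Ψm q) = (-2 : ℝ) • (F q * F q) ∧
        deriv Ψm q = (4 : ℝ) • Ψp q - d (F q) ∧
        d (Ψp q) = (-(1 : ℝ) / 2) • deriv (fun s => F s * F s) q)) ∧
    ((∀ q : ℝ,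
        deriv Ψm q = (4 : ℝ) • Ψp q - d (F q) ∧
        d (Ψp q) = (-(1 : ℝ) / 2) • deriv (fun s => F s * F s) q) →
      ∀ q : ℝ, deriv (fun s => d (Ψm s) + (2 : ℝ) • (F s * F s)) q = 0) := by
  have hderiv q (hevol : deriv Ψm q = (4 : ℝ) • Ψp q - d (F q)) :=
    deriv_d_add_two_smul_mul_self hdd (hF q) (hΨm q) hevol
  simp only [dProd_fst_neg_eq_iff, dProd_snd_neg_eq_iff, eq_neg_half_smul_iff]
  refine ⟨⟨fun h q => ⟨(h q).1, (h q).2, ?_⟩, fun h q => ⟨(h q).1, (h q).2.1⟩⟩,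
    fun h q => (hderiv q (h q).1).trans (h q).2⟩
  have hflat : (fun s => d (Ψm s) + (2 : ℝ) • (F s * F s)) = fun _ => 0 :=
    funext fun s => by rw [(h s).1]; module
  rw [← hderiv q (h q).2, hflat, deriv_const]

/-- Let `(F(q), Ψ₊(q), Ψ₋(q))` be a family of SU(3)-structures on `M⁶` and
set `φ(q) = F(q)∧dq - Ψ₋(q)` with `*φ(q) = ½F(q)∧F(q) + Ψ₊(q)∧dq` on `M⁶ × ℝ`.  Then
`dφ = 4*φ` if and only if `dΨ₋(q) = -2F(q)∧F(q)`, `∂_qΨ₋ = 4Ψ₊ - dF`, and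
`dΨ₊ = -½∂_q(F∧F)`.  Moreover, the last two (evolution) equations imply
`∂_q(dΨ₋ + 2F∧F) = 0`, so the nearly half flat condition is preserved in `q`. -/
theorem nearlyParallelG2_iff_nearlyHalfFlat_evolution [NormedRing A] [NormedAlgebra ℝ A]
    (d : A →L[ℝ] A) (F Ψp Ψm : ℝ → A)
    (hF : Differentiable ℝ F) (hΨp : Differentiable ℝ Ψp) (hΨm : Differentiable ℝ Ψm)
    (hdd : ∀ x : A, d (d x) = 0) :
    ((∀ q : ℝ,
        (dProd d 3 (fun s => -(Ψm s), fun s => F s)).1 q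
          = (4 : ℝ) • (((1 : ℝ) / 2) • (F q * F q)) ∧
        (dProd d 3 (fun s => -(Ψm s), fun s => F s)).2 q
          = (4 : ℝ) • Ψp q) ↔
      (∀ q : ℝ,
        d (Ψm q) = (-2 : ℝ) • (F q * F q) ∧
        deriv Ψm q = (4 : ℝ) • Ψp q - d (F q) ∧
        d (Ψp q) = (-(1 : ℝ) / 2) • deriv (fun s => F s * F s) q)) ∧
    ((∀ q : ℝ,
        deriv Ψm q = (4 : ℝ) • Ψp q - d (F q) ∧
        d (Ψp q) = (-(1 : ℝ) / 2) • deriv (fun s => F s * F s) q) →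
      ∀ q : ℝ, deriv (fun s => d (Ψm s) + (2 : ℝ) • (F s * F s)) q = 0) :=
  nearlyParallelG2_iff_nearlyHalfFlat_evolution_general d F Ψp Ψm hF hΨm hdd
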